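/- Comparison of FK-percolation with Bernoulli percolation: for every finite graph G = (V,E), every boundary set B ⊆ V and boundary condition ξ (a partition of B), every p ∈ (0,1) and every q ≥ 1, one has ℙ_{p/(p+(1−p)q)}[A] ≤ φ^ξ_{G,p,q}[A] ≤ ℙ_p[A] for every increasing event A ⊆ {0,1}^E, where ℙ_r denotes the product Bernoulli(r) measure on {0,1}^E. -/

import Mathlib

namespace FK

/-- An event `A ⊆ {0,1}^E` is increasing if it is stable under opening edges. -/
def Increasing {E : Type*} (A : Set (E → Bool)) : Prop :=
  ∀ ⦃ω ω' : E → Bool⦄, (∀ e, ω e ≤ ω' e) → ω ∈ A → ω' ∈ A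

variable {V Eg : Type*}

/-- Two vertices are related in one step if they are joined by an open edge, or if they
lie in a common class of the boundary condition `ξ`. -/
def fkStep [DecidableEq V] (ends : Eg → Sym2 V) {B : Finset V} (ξ : Finpartition B)
    (ω : Eg → Bool) (x y : V) : Prop :=
  (∃ e : Eg, ω e = true ∧ ends e = s(x, y)) ∨ ∃ t ∈ ξ.parts, x ∈ t ∧ y ∈ t

/-- `k(ω^ξ)`: the number of connected components of the spanning subgraph of open edges
after identifying, for each class of `ξ`, all vertices of that class (isolated vertices
count as components). -/
noncomputable def numComp [DecidableEq V] (ends : Eg → Sym2 V) {B : Finset V}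
    (ξ : Finpartition B) (ω : Eg → Bool) : ℕ :=
  Set.ncard {C : Set V | ∃ x, C = {y | Relation.EqvGen (fkStep ends ξ ω) x y}}

/-- The FK weight `p^{|ω|} (1−p)^{|E∖ω|} q^{k(ω^ξ)}` of a configuration `ω`. -/
noncomputable def fkWeight [DecidableEq V] [Fintype Eg] (ends : Eg → Sym2 V)
    {B : Finset V} (ξ : Finpartition B) (p q : ℝ) (ω : Eg → Bool) : ℝ :=
  p ^ (Finset.univ.filter fun e : Eg => ω e = true).card *
    (1 - p) ^ (Finset.univ.filter fun e : Eg => ω e = false).card *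
    q ^ numComp ends ξ ω

/-- `φ^ξ_{G,p,q}[A]`: the FK-percolation probability of the event `A`. -/
noncomputable def fkProb [DecidableEq V] [Fintype Eg] [DecidableEq Eg]
    (ends : Eg → Sym2 V) {B : Finset V} (ξ : Finpartition B) (p q : ℝ)
    (A : Set (Eg → Bool)) : ℝ :=
  (∑ ω : Eg → Bool, A.indicator (fkWeight ends ξ p q) ω) /
    ∑ ω : Eg → Bool, fkWeight ends ξ p q ω

/-- `ℙ_r[A]` under the product Bernoulli(r) measure on `{0,1}^E`. -/
noncomputable def bernProb [Fintype Eg] [DecidableEq Eg] (r : ℝ)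
    (A : Set (Eg → Bool)) : ℝ :=
  ∑ ω : Eg → Bool, A.indicator (fun ω => ∏ e, if ω e then r else 1 - r) ω


section Comp


variable [DecidableEq V] [DecidableEq Eg] {ends : Eg → Sym2 V} {B : Finset V} {ξ : Finpartition B}

def cls (ends : Eg → Sym2 V) (ξ : Finpartition B) (ω : Eg → Bool) (x : V) : Set V :=
  {y | Relation.EqvGen (fkStep ends ξ ω) x y}

lemma numComp_eq (ends : Eg → Sym2 V) (ξ : Finpartition B) (ω : Eg → Bool) :
    numComp ends ξ ω = Set.ncard {C : Set V | ∃ x, C = cls ends ξ ω x} := rfl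

lemma mem_cls_self (ω : Eg → Bool) (x : V) : x ∈ cls ends ξ ω x := Relation.EqvGen.refl x

lemma cls_eq_of_rel {ω : Eg → Bool} {x y : V}
    (h : Relation.EqvGen (fkStep ends ξ ω) x y) : cls ends ξ ω x = cls ends ξ ω y := by
  ext z
  exact ⟨fun hz => Relation.EqvGen.trans _ _ _ (Relation.EqvGen.symm _ _ h) hz,
    fun hz => Relation.EqvGen.trans _ _ _ h hz⟩

lemma bool_le_true {x y : Bool} (h : x ≤ y) (hx : x = true) : y = true := by
  revert h hx; revert x y; decide

lemma eqvGen_mono {ω ω' : Eg → Bool} (h : ∀ e, ω e ≤ ω' e) {x y : V}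
    (hxy : Relation.EqvGen (fkStep ends ξ ω) x y) :
    Relation.EqvGen (fkStep ends ξ ω') x y := by
  refine Relation.EqvGen.mono ?_ _ _ hxy
  rintro a b (⟨e, he, hee⟩ | hbd)
  · exact Or.inl ⟨e, bool_le_true (h e) he, hee⟩
  · exact Or.inr hbd

lemma gcls {ω ω' : Eg → Bool} (h : ∀ e, ω e ≤ ω' e) (x : V) :
    {y | ∃ z ∈ cls ends ξ ω x, Relation.EqvGen (fkStep ends ξ ω') z y} = cls ends ξ ω' x := by
  ext y
  constructor
  · rintro ⟨z, hz, hzy⟩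
    exact Relation.EqvGen.trans _ _ _ (eqvGen_mono h hz) hzy
  · intro hy; exact ⟨x, mem_cls_self ω x, hy⟩

def gmap (ends : Eg → Sym2 V) (ξ : Finpartition B) (ω' : Eg → Bool) (C : Set V) : Set V :=
  {y | ∃ z ∈ C, Relation.EqvGen (fkStep ends ξ ω') z y}

lemma gmap_cls {ω ω' : Eg → Bool} (h : ∀ e, ω e ≤ ω' e) (x : V) :
    gmap ends ξ ω' (cls ends ξ ω x) = cls ends ξ ω' x := gcls h x

lemma numComp_antitone [Fintype V] {ω ω' : Eg → Bool} (h : ∀ e, ω e ≤ ω' e) :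
    numComp ends ξ ω' ≤ numComp ends ξ ω := by
  rw [numComp_eq, numComp_eq]
  have hsub : {C : Set V | ∃ x, C = cls ends ξ ω' x} ⊆
      gmap ends ξ ω' '' {C : Set V | ∃ x, C = cls ends ξ ω x} := by
    rintro D ⟨x, rfl⟩
    exact ⟨cls ends ξ ω x, ⟨x, rfl⟩, gmap_cls h x⟩
  calc Set.ncard {C : Set V | ∃ x, C = cls ends ξ ω' x}
      ≤ Set.ncard (gmap ends ξ ω' '' {C : Set V | ∃ x, C = cls ends ξ ω x}) :=
        Set.ncard_le_ncard hsub (Set.toFinite _)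
    _ ≤ _ := Set.ncard_image_le (Set.toFinite _)

lemma update_decomp {ω : Eg → Bool} {e : Eg} {u v : V} (huv : ends e = s(u, v)) {x y : V}
    (h : Relation.EqvGen (fkStep ends ξ (Function.update ω e true)) x y) :
    Relation.EqvGen (fkStep ends ξ ω) x y ∨
      (Relation.EqvGen (fkStep ends ξ ω) x u ∧ Relation.EqvGen (fkStep ends ξ ω) v y) ∨
      (Relation.EqvGen (fkStep ends ξ ω) x v ∧ Relation.EqvGen (fkStep ends ξ ω) u y) := by
  induction h with
  | rel a b hab =>
    rcases hab with ⟨e', he', hee'⟩ | hbd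
    · by_cases hee : e' = e
      · subst hee
        have hs : s(a, b) = s(u, v) := hee'.symm.trans huv
        rw [Sym2.eq_iff] at hs
        rcases hs with ⟨rfl, rfl⟩ | ⟨rfl, rfl⟩
        · exact Or.inr (Or.inl ⟨Relation.EqvGen.refl a, Relation.EqvGen.refl b⟩)
        · exact Or.inr (Or.inr ⟨Relation.EqvGen.refl a, Relation.EqvGen.refl b⟩)
      · have hoe : ω e' = true := by rwa [Function.update_of_ne hee] at he'
        exact Or.inl (Relation.EqvGen.rel a b (Or.inl ⟨e', hoe, hee'⟩))
    · exact Or.inl (Relation.EqvGen.rel a b (Or.inr hbd))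
  | refl a => exact Or.inl (Relation.EqvGen.refl a)
  | symm a b h ih =>
    rcases ih with h1 | ⟨h1, h2⟩ | ⟨h1, h2⟩
    · exact Or.inl (Relation.EqvGen.symm _ _ h1)
    · exact Or.inr (Or.inr ⟨Relation.EqvGen.symm _ _ h2, Relation.EqvGen.symm _ _ h1⟩)
    · exact Or.inr (Or.inl ⟨Relation.EqvGen.symm _ _ h2, Relation.EqvGen.symm _ _ h1⟩)
  | trans a b c hab hbc ih1 ih2 =>
    rcases ih1 with h1 | ⟨h1, h2⟩ | ⟨h1, h2⟩ <;> rcases ih2 with h3 | ⟨h3, h4⟩ | ⟨h3, h4⟩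
    · exact Or.inl (Relation.EqvGen.trans _ _ _ h1 h3)
    · exact Or.inr (Or.inl ⟨Relation.EqvGen.trans _ _ _ h1 h3, h4⟩)
    · exact Or.inr (Or.inr ⟨Relation.EqvGen.trans _ _ _ h1 h3, h4⟩)
    · exact Or.inr (Or.inl ⟨h1, Relation.EqvGen.trans _ _ _ h2 h3⟩)
    · exact Or.inr (Or.inl ⟨h1, h4⟩)
    · exact Or.inl (Relation.EqvGen.trans _ _ _ h1 h4)
    · exact Or.inr (Or.inr ⟨h1, Relation.EqvGen.trans _ _ _ h2 h3⟩)
    · exact Or.inl (Relation.EqvGen.trans _ _ _ h1 h4)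
    · exact Or.inr (Or.inr ⟨h1, h4⟩)

lemma numComp_le_update [Fintype V] (ω : Eg → Bool) (e : Eg) :
    numComp ends ξ ω ≤ numComp ends ξ (Function.update ω e true) + 1 := by
  obtain ⟨u, v, huv⟩ : ∃ u v, ends e = s(u, v) := Sym2.ind (fun u v => ⟨u, v, rfl⟩) (ends e)
  have hle : ∀ e', ω e' ≤ Function.update ω e true e' := by
    intro e'
    by_cases h : e' = e
    · subst h; rw [Function.update_self]; exact Bool.le_true _
    · rw [Function.update_of_ne h]
  set ω' := Function.update ω e true with hω'
  set S := {C : Set V | ∃ x, C = cls ends ξ ω x} with hS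
  have hinj : Set.InjOn (gmap ends ξ ω') (S \ {cls ends ξ ω u}) := by
    rintro C1 ⟨⟨x, rfl⟩, hC1⟩ C2 ⟨⟨y, rfl⟩, hC2⟩ hgeq
    have hy : y ∈ gmap ends ξ ω' (cls ends ξ ω y) := ⟨y, mem_cls_self _ _, Relation.EqvGen.refl y⟩
    rw [← hgeq] at hy
    obtain ⟨z, hz, hzy⟩ := hy
    have hxy : Relation.EqvGen (fkStep ends ξ ω') x y :=
      Relation.EqvGen.trans _ _ _ (eqvGen_mono hle hz) hzy
    rcases update_decomp huv hxy with h1 | ⟨h1, h2⟩ | ⟨h1, h2⟩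
    · exact cls_eq_of_rel h1
    · exact absurd (cls_eq_of_rel h1) (by simpa using hC1)
    · exact absurd (cls_eq_of_rel (Relation.EqvGen.symm _ _ h2)) (by simpa using hC2)
  have himg : gmap ends ξ ω' '' (S \ {cls ends ξ ω u}) ⊆ {C : Set V | ∃ x, C = cls ends ξ ω' x} := by
    rintro D ⟨C, ⟨⟨x, rfl⟩, -⟩, rfl⟩
    exact ⟨x, (gmap_cls hle x)⟩
  have hsub : S ⊆ insert (cls ends ξ ω u) (S \ {cls ends ξ ω u}) := by
    intro C hC
    by_cases h : C = cls ends ξ ω u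
    · exact h ▸ Set.mem_insert _ _
    · exact Set.mem_insert_of_mem _ ⟨hC, by simpa using h⟩
  calc numComp ends ξ ω = S.ncard := numComp_eq ends ξ ω
    _ ≤ (insert (cls ends ξ ω u) (S \ {cls ends ξ ω u})).ncard :=
        Set.ncard_le_ncard hsub (Set.toFinite _)
    _ ≤ (S \ {cls ends ξ ω u}).ncard + 1 := Set.ncard_insert_le _ _
    _ = (gmap ends ξ ω' '' (S \ {cls ends ξ ω u})).ncard + 1 := by
        rw [Set.ncard_image_of_injOn hinj]
    _ ≤ numComp ends ξ ω' + 1 := by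
        rw [numComp_eq]
        exact Nat.add_le_add_right (Set.ncard_le_ncard himg (Set.toFinite _)) 1

lemma numComp_le_of_le [Fintype V] [Fintype Eg] {ω ω' : Eg → Bool}
    (h : ∀ e, ω e ≤ ω' e) :
    numComp ends ξ ω ≤ numComp ends ξ ω' +
      (Finset.univ.filter fun e => ω e ≠ ω' e).card := by
  generalize hn : (Finset.univ.filter fun e => ω e ≠ ω' e).card = n
  induction n generalizing ω with
  | zero =>
    have hωω : ω = ω' := by
      funext e
      by_contra hne
      have he : e ∈ Finset.univ.filter fun e => ω e ≠ ω' e := by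
        simp [hne]
      rw [Finset.card_eq_zero] at hn
      simp [hn] at he
    rw [hωω]; simp
  | succ n ih =>
    have hpos : 0 < (Finset.univ.filter fun e => ω e ≠ ω' e).card := by omega
    obtain ⟨e, he⟩ := Finset.card_pos.mp hpos
    have hne : ω e ≠ ω' e := (Finset.mem_filter.mp he).2
    have hωe : ω e = false ∧ ω' e = true := by
      have hle := h e
      revert hle hne
      cases ω e <;> cases ω' e <;> simp <;> decide
    have h1 : ∀ e', Function.update ω e true e' ≤ ω' e' := by
      intro e'
      by_cases hee : e' = e
      · subst hee; rw [Function.update_self, hωe.2]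
      · rw [Function.update_of_ne hee]; exact h e'
    have hfil : (Finset.univ.filter fun e' => Function.update ω e true e' ≠ ω' e') =
        (Finset.univ.filter fun e' => ω e' ≠ ω' e').erase e := by
      ext e'
      simp only [Finset.mem_filter, Finset.mem_erase, Finset.mem_univ, true_and]
      by_cases hee : e' = e
      · subst hee
        simp [Function.update_self, hωe.2]
      · simp [Function.update_of_ne hee, hee]
    have hcard : (Finset.univ.filter fun e' =>
        Function.update ω e true e' ≠ ω' e').card = n := by
      rw [hfil, Finset.card_erase_of_mem he, hn]
      omega
    calc numComp ends ξ ω ≤ numComp ends ξ (Function.update ω e true) + 1 :=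
          numComp_le_update ω e
      _ ≤ (numComp ends ξ ω' + n) + 1 := Nat.add_le_add_right (ih h1 hcard) 1
      _ = numComp ends ξ ω' + (n + 1) := by omega

end Comp

section Layer2
open Finset
variable [Fintype Eg] [DecidableEq Eg]


lemma card_true_add_diff {ω ω' : Eg → Bool} (h : ∀ e, ω e ≤ ω' e) :
    (Finset.univ.filter fun e => ω' e = true).card
      = (Finset.univ.filter fun e => ω e = true).card
        + (Finset.univ.filter fun e => ω e ≠ ω' e).card := by
  rw [Finset.card_filter, Finset.card_filter, Finset.card_filter, ← Finset.sum_add_distrib]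
  refine Finset.sum_congr rfl fun e _ => ?_
  have he := h e
  revert he
  cases ω e <;> cases ω' e <;> decide
lemma card_false_add_diff {ω ω' : Eg → Bool} (h : ∀ e, ω e ≤ ω' e) :
    (Finset.univ.filter fun e => ω e = false).card
      = (Finset.univ.filter fun e => ω' e = false).card
        + (Finset.univ.filter fun e => ω e ≠ ω' e).card := by
  rw [Finset.card_filter, Finset.card_filter, Finset.card_filter, ← Finset.sum_add_distrib]
  refine Finset.sum_congr rfl fun e _ => ?_
  have he := h e
  revert he
  cases ω e <;> cases ω' e <;> decide

lemma card_sup_inf_true (a b : Eg → Bool) :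
    (Finset.univ.filter fun e => (a ⊔ b) e = true).card
        + (Finset.univ.filter fun e => (a ⊓ b) e = true).card
      = (Finset.univ.filter fun e => a e = true).card
        + (Finset.univ.filter fun e => b e = true).card := by
  rw [Finset.card_filter, Finset.card_filter, Finset.card_filter, Finset.card_filter,
    ← Finset.sum_add_distrib, ← Finset.sum_add_distrib]
  refine Finset.sum_congr rfl fun e _ => ?_
  rcases Bool.dichotomy (a e) with ha | ha <;> rcases Bool.dichotomy (b e) with hb | hb <;>
    simp [Pi.sup_apply, Pi.inf_apply, ha, hb]

lemma card_sup_inf_false (a b : Eg → Bool) :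
    (Finset.univ.filter fun e => (a ⊔ b) e = false).card
        + (Finset.univ.filter fun e => (a ⊓ b) e = false).card
      = (Finset.univ.filter fun e => a e = false).card
        + (Finset.univ.filter fun e => b e = false).card := by
  rw [Finset.card_filter, Finset.card_filter, Finset.card_filter, Finset.card_filter,
    ← Finset.sum_add_distrib, ← Finset.sum_add_distrib]
  refine Finset.sum_congr rfl fun e _ => ?_
  rcases Bool.dichotomy (a e) with ha | ha <;> rcases Bool.dichotomy (b e) with hb | hb <;>
    simp [Pi.sup_apply, Pi.inf_apply, ha, hb]

lemma upper_key {p t q : ℝ} (hp : 0 < p) (ht : 0 < t) (hq1 : 1 ≤ q)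
    {na ma nb mb ns ms ni mi ka ki : ℕ}
    (hn : na + nb = ns + ni) (hm : ma + mb = ms + mi) (hk : ka ≤ ki) :
    p ^ na * t ^ ma * q ^ ka * (p ^ nb * t ^ mb) ≤
      p ^ ns * t ^ ms * (p ^ ni * t ^ mi * q ^ ki) := by
  have e1 : p ^ na * t ^ ma * q ^ ka * (p ^ nb * t ^ mb)
      = p ^ (na + nb) * t ^ (ma + mb) * q ^ ka := by rw [pow_add, pow_add]; ring
  have e2 : p ^ ns * t ^ ms * (p ^ ni * t ^ mi * q ^ ki)
      = p ^ (ns + ni) * t ^ (ms + mi) * q ^ ki := by rw [pow_add, pow_add]; ring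
  rw [e1, e2, hn, hm]
  exact mul_le_mul_of_nonneg_left (pow_le_pow_right₀ hq1 hk)
    (le_of_lt (mul_pos (pow_pos hp _) (pow_pos ht _)))

lemma lower_key {r s u D q p : ℝ} (hr : 0 < r) (hs : 0 < s) (hu : 0 < u) (hD : 0 < D)
    (hq1 : 1 ≤ q) (hp : p = r * D) (huq : u * q = s * D)
    {ni nb ma ms dd kb ks : ℕ} (hk : kb ≤ ks + dd) :
    r ^ (ni + dd) * s ^ ma * (p ^ nb * u ^ (ms + dd) * q ^ kb) ≤
      p ^ (nb + dd) * u ^ ms * q ^ ks * (r ^ ni * s ^ (ma + dd)) := by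
  subst hp
  have hq0 : (0:ℝ) < q := lt_of_lt_of_le one_pos hq1
  rw [← mul_le_mul_iff_of_pos_right (pow_pos hq0 dd)]
  have h1 : u ^ dd * q ^ dd = s ^ dd * D ^ dd := by rw [← mul_pow, ← mul_pow, huq]
  have eL : r ^ (ni + dd) * s ^ ma * ((r * D) ^ nb * u ^ (ms + dd) * q ^ kb) * q ^ dd
      = r ^ ni * s ^ ma * (r * D) ^ nb * u ^ ms * (r ^ dd * s ^ dd * D ^ dd) * q ^ kb := by
    rw [pow_add r, pow_add u]
    linear_combination (r ^ ni * r ^ dd * s ^ ma * (r * D) ^ nb * u ^ ms * q ^ kb) * h1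
  have eR : (r * D) ^ (nb + dd) * u ^ ms * q ^ ks * (r ^ ni * s ^ (ma + dd)) * q ^ dd
      = r ^ ni * s ^ ma * (r * D) ^ nb * u ^ ms * (r ^ dd * s ^ dd * D ^ dd)
          * (q ^ ks * q ^ dd) := by
    rw [pow_add (r * D), pow_add s, mul_pow r D]
    ring
  rw [eL, eR, ← pow_add q]
  refine mul_le_mul_of_nonneg_left (pow_le_pow_right₀ hq1 hk) (le_of_lt ?_)
  exact mul_pos (mul_pos (mul_pos (mul_pos (pow_pos hr ni) (pow_pos hs ma))
    (pow_pos (mul_pos hr hD) nb)) (pow_pos hu ms))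
    (mul_pos (mul_pos (pow_pos hr dd) (pow_pos hs dd)) (pow_pos hD dd))

lemma holley_ratio {α : Type*} [DistribLattice α] [Fintype α] [Nonempty α]
    (w1 w2 : α → ℝ) (A : Set α)
    (h1 : ∀ a, 0 < w1 a) (h2 : ∀ a, 0 < w2 a)
    (hA : ∀ ⦃a b : α⦄, a ≤ b → a ∈ A → b ∈ A)
    (hcond : ∀ a b, w1 a * w2 b ≤ w2 (a ⊔ b) * w1 (a ⊓ b)) :
    (∑ a, A.indicator w1 a) / (∑ a, w1 a) ≤ (∑ a, A.indicator w2 a) / (∑ a, w2 a) := by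
  classical
  have hs1 : 0 < ∑ a, w1 a := Finset.sum_pos (fun a _ => h1 a) Finset.univ_nonempty
  have hs2 : 0 < ∑ a, w2 a := Finset.sum_pos (fun a _ => h2 a) Finset.univ_nonempty
  rw [div_le_div_iff₀ hs1 hs2]
  have key := four_functions_theorem_univ (A.indicator w1) w2 w1 (A.indicator w2)
    (fun a => Set.indicator_nonneg (fun x _ => (h1 x).le) a) (fun a => (h2 a).le)
    (fun a => (h1 a).le) (fun a => Set.indicator_nonneg (fun x _ => (h2 x).le) a)
    (fun a b => ?_)
  · calc (∑ a, A.indicator w1 a) * ∑ a, w2 a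
        ≤ (∑ a, w1 a) * ∑ a, A.indicator w2 a := key
      _ = (∑ a, A.indicator w2 a) * ∑ a, w1 a := mul_comm _ _
  · by_cases ha : a ∈ A
    · rw [Set.indicator_of_mem ha, Set.indicator_of_mem (hA le_sup_left ha)]
      calc w1 a * w2 b ≤ w2 (a ⊔ b) * w1 (a ⊓ b) := hcond a b
        _ = w1 (a ⊓ b) * w2 (a ⊔ b) := mul_comm _ _
    · rw [Set.indicator_of_notMem ha, zero_mul]
      exact mul_nonneg (h1 _).le (Set.indicator_nonneg (fun x _ => (h2 x).le) _)

noncomputable def bernWeight (r : ℝ) (ω : Eg → Bool) : ℝ :=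
  r ^ (Finset.univ.filter fun e : Eg => ω e = true).card *
    (1 - r) ^ (Finset.univ.filter fun e : Eg => ω e = false).card

lemma prod_ite_eq_bernWeight (r : ℝ) (ω : Eg → Bool) :
    (∏ e, if ω e then r else 1 - r) = bernWeight r ω := by
  rw [Finset.prod_ite]
  simp [bernWeight, Finset.prod_const, Bool.not_eq_true]

lemma sum_bernWeight (r : ℝ) : ∑ ω : Eg → Bool, bernWeight r ω = 1 := by
  have h := Finset.prod_univ_sum (fun _ : Eg => (Finset.univ : Finset Bool))
    (fun _ b => if b then r else 1 - r)
  rw [Fintype.piFinset_univ] at h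
  calc ∑ ω : Eg → Bool, bernWeight r ω
      = ∑ ω : Eg → Bool, ∏ e, if ω e then r else 1 - r :=
        Finset.sum_congr rfl fun ω _ => (prod_ite_eq_bernWeight r ω).symm
    _ = ∏ _e : Eg, ∑ b : Bool, if b then r else 1 - r := h.symm
    _ = ∏ _e : Eg, 1 := by
        refine Finset.prod_congr rfl fun e _ => ?_
        simp
    _ = 1 := Finset.prod_const_one

end Layer2

/-- Comparison of FK-percolation with Bernoulli percolation: for every increasing event `A`,
`ℙ_{p/(p+(1−p)q)}[A] ≤ φ^ξ_{G,p,q}[A] ≤ ℙ_p[A]`. -/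
theorem fk_bernoulli_comparison [Fintype V] [DecidableEq V] [Fintype Eg] [DecidableEq Eg]
    (ends : Eg → Sym2 V) (B : Finset V) (ξ : Finpartition B)
    (p : ℝ) (hp : p ∈ Set.Ioo (0 : ℝ) 1) (q : ℝ) (hq : 1 ≤ q)
    (A : Set (Eg → Bool)) (hA : Increasing A) :
    bernProb (p / (p + (1 - p) * q)) A ≤ fkProb ends ξ p q A ∧
      fkProb ends ξ p q A ≤ bernProb p A := by
  obtain ⟨hp0, hp1⟩ := hp
  have hq0 : (0:ℝ) < q := lt_of_lt_of_le one_pos hq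
  have ht0 : (0:ℝ) < 1 - p := by linarith
  have hD : (0:ℝ) < p + (1 - p) * q := by nlinarith
  set r : ℝ := p / (p + (1 - p) * q) with hrdef
  have hr0 : 0 < r := div_pos hp0 hD
  have hrD : r * (p + (1 - p) * q) = p := div_mul_cancel₀ p (ne_of_gt hD)
  have hs0 : 0 < 1 - r := by
    have hlt : r < 1 := by
      rw [hrdef, div_lt_one hD]; nlinarith
    linarith
  have huq : (1 - p) * q = (1 - r) * (p + (1 - p) * q) := by
    have h2 : (1 - r) * (p + (1 - p) * q) = (p + (1 - p) * q) - r * (p + (1 - p) * q) := by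
      ring
    rw [h2, hrD]; ring
  have hWpos : ∀ ω : Eg → Bool, 0 < fkWeight ends ξ p q ω := fun ω =>
    mul_pos (mul_pos (pow_pos hp0 _) (pow_pos ht0 _)) (pow_pos hq0 _)
  have hbwr : ∀ ω : Eg → Bool, 0 < bernWeight r ω := fun ω =>
    mul_pos (pow_pos hr0 _) (pow_pos hs0 _)
  have hbwp : ∀ ω : Eg → Bool, 0 < bernWeight p ω := fun ω =>
    mul_pos (pow_pos hp0 _) (pow_pos ht0 _)
  have hAmono : ∀ ⦃a b : Eg → Bool⦄, a ≤ b → a ∈ A → b ∈ A :=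
    fun a b hab ha => hA (fun e => hab e) ha
  have hbern : ∀ t : ℝ,
      bernProb (Eg := Eg) t A = ∑ ω : Eg → Bool, A.indicator (bernWeight t) ω := by
    intro t
    unfold bernProb
    rw [show (fun ω : Eg → Bool => ∏ e, if ω e then t else 1 - t) = bernWeight t from
      funext fun ω => prod_ite_eq_bernWeight t ω]
  constructor
  · -- lower bound
    have hcond : ∀ a b : Eg → Bool,
        bernWeight r a * fkWeight ends ξ p q b ≤
          fkWeight ends ξ p q (a ⊔ b) * bernWeight r (a ⊓ b) := by
      intro a b
      have hbs : ∀ e, b e ≤ (a ⊔ b) e := fun e => le_sup_right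
      have h1 := card_true_add_diff hbs
      have h2 := card_false_add_diff hbs
      have h3 := numComp_le_of_le (ends := ends) (ξ := ξ) hbs
      have h4 := card_sup_inf_true a b
      have h5 := card_sup_inf_false a b
      unfold fkWeight bernWeight
      rw [show (Finset.univ.filter fun e => a e = true).card
            = (Finset.univ.filter fun e => (a ⊓ b) e = true).card
              + (Finset.univ.filter fun e => b e ≠ (a ⊔ b) e).card from by omega,
          show (Finset.univ.filter fun e => b e = false).card
            = (Finset.univ.filter fun e => (a ⊔ b) e = false).card
              + (Finset.univ.filter fun e => b e ≠ (a ⊔ b) e).card from h2,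
          show (Finset.univ.filter fun e => (a ⊔ b) e = true).card
            = (Finset.univ.filter fun e => b e = true).card
              + (Finset.univ.filter fun e => b e ≠ (a ⊔ b) e).card from h1,
          show (Finset.univ.filter fun e => (a ⊓ b) e = false).card
            = (Finset.univ.filter fun e => a e = false).card
              + (Finset.univ.filter fun e => b e ≠ (a ⊔ b) e).card from by omega]
      exact lower_key hr0 hs0 ht0 hD hq hrD.symm huq h3
    have h := holley_ratio (bernWeight r) (fkWeight ends ξ p q) A hbwr hWpos hAmono hcond
    rw [sum_bernWeight, div_one] at h
    rw [hbern r]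
    unfold fkProb
    exact h
  · -- upper bound
    have hcond : ∀ a b : Eg → Bool,
        fkWeight ends ξ p q a * bernWeight p b ≤
          bernWeight p (a ⊔ b) * fkWeight ends ξ p q (a ⊓ b) := by
      intro a b
      have hinf : ∀ e, (a ⊓ b) e ≤ a e := fun e => inf_le_left
      have h3 := numComp_antitone (ends := ends) (ξ := ξ) hinf
      unfold fkWeight bernWeight
      exact upper_key hp0 ht0 hq (card_sup_inf_true a b).symm (card_sup_inf_false a b).symm h3
    have h := holley_ratio (fkWeight ends ξ p q) (bernWeight p) A hWpos hbwp hAmono hcond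
    rw [sum_bernWeight, div_one] at h
    rw [hbern p]
    unfold fkProb
    exact h
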